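/- Let n ≥ 1, s ∈ (0,1), let G be a Young function satisfying condition (cond) with exponents 1 < p⁻ ≤ p⁺ < ∞ and s·p⁺ < n, and define φ(r) = ∫₀^r G^{-1}(τ)·τ^{−(n+s)/n} dτ and K(t) = t·G(φ(1/t)) for t > 0. Then for every q with 0 < q < p⁻ there exists a constant C > 0, depending only on n, s, p⁻, p⁺ and q, such that K(t) ≤ C·max{t, t^{sq/n}} for all t > 0. -/

import Mathlib

open MeasureTheory Real Set Filter
open scoped ENNReal

noncomputable section

/-- A Young function `G` together with its right-continuous density `g`:
`G t = ∫₀ᵗ g(τ) dτ` for `t ≥ 0`, where `g` is right-continuous, nondecreasing on `[0,∞)`,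
`g 0 = 0`, `g t > 0` for `t > 0` and `g t → ∞` as `t → ∞`.  `G` is extended evenly
(`G (-t) = G t`) and `g` oddly (`g (-t) = -g t`). -/
structure YoungPair where
  g : ℝ → ℝ
  G : ℝ → ℝ
  g_odd : ∀ t, g (-t) = -g t
  g_zero : g 0 = 0
  g_pos : ∀ t : ℝ, 0 < t → 0 < g t
  g_mono : MonotoneOn g (Set.Ici 0)
  g_rightCont : ∀ t ∈ Set.Ici (0 : ℝ), ContinuousWithinAt g (Set.Ici t) t
  g_atTop : Filter.Tendsto g Filter.atTop Filter.atTop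
  G_even : ∀ t, G (-t) = G t
  G_eq : ∀ t : ℝ, 0 ≤ t → G t = ∫ τ in (0 : ℝ)..t, g τ

/-- Condition (cond): `p⁻ ≤ t·g(t)/G(t) ≤ p⁺` for all `t > 0`. -/
def YoungPair.Cond (Y : YoungPair) (pm pp : ℝ) : Prop :=
  ∀ t : ℝ, 0 < t → pm * Y.G t ≤ t * Y.g t ∧ t * Y.g t ≤ pp * Y.G t

/-- Euclidean space `ℝⁿ`. -/
abbrev Euc (n : ℕ) := EuclideanSpace ℝ (Fin n)

/-- The `s`-Hölder quotient `D_s u(x,y) = (u x - u y)/|x-y|^s`. -/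
def Ds (n : ℕ) (s : ℝ) (u : Euc n → ℝ) (x y : Euc n) : ℝ :=
  (u x - u y) / ‖x - y‖ ^ s

/-- The modular `Φ_G(u) = ∫_Ω G(|u|) dx` (as an extended real). -/
def modG (n : ℕ) (G : ℝ → ℝ) (Ω : Set (Euc n)) (u : Euc n → ℝ) : ℝ≥0∞ :=
  ∫⁻ x in Ω, ENNReal.ofReal (G |u x|)

/-- The Gagliardo modular `Φ_{s,G}(u) = ∬ G(|D_s u(x,y)|) dx dy/|x-y|ⁿ`
(as an extended real). -/
def modsG (n : ℕ) (s : ℝ) (G : ℝ → ℝ) (u : Euc n → ℝ) : ℝ≥0∞ :=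
  ∫⁻ p : Euc n × Euc n, ENNReal.ofReal (G |Ds n s u p.1 p.2| / ‖p.1 - p.2‖ ^ (n : ℝ))

/-- Membership in `W^{s,G}_0(Ω)`: measurable, finite modulars, vanishing a.e. outside `Ω`. -/
def MemW0 (n : ℕ) (s : ℝ) (G : ℝ → ℝ) (Ω : Set (Euc n)) (u : Euc n → ℝ) : Prop :=
  Measurable u ∧ modG n G Ω u + modsG n s G u < ⊤ ∧
    ∀ᵐ x : Euc n ∂volume, x ∉ Ω → u x = 0

/-- `u` is a weak solution of `(-Δ_g)^s u = rhs(u)` in `Ω`, `u = 0` in `ℝⁿ ∖ Ω`: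
for every `v ∈ W^{s,G}_0(Ω)` the defining double integral converges absolutely and equals
`∫_Ω rhs(u) v dx`. -/
def IsWeakSol (n : ℕ) (s : ℝ) (Y : YoungPair) (Ω : Set (Euc n)) (rhs : ℝ → ℝ)
    (u : Euc n → ℝ) : Prop :=
  MemW0 n s Y.G Ω u ∧
  ∀ v : Euc n → ℝ, MemW0 n s Y.G Ω v →
    MeasureTheory.Integrable (fun p : Euc n × Euc n =>
      Y.g (Ds n s u p.1 p.2) * (v p.1 - v p.2) / ‖p.1 - p.2‖ ^ ((n : ℝ) + s)) ∧
    (∫ p : Euc n × Euc n,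
        Y.g (Ds n s u p.1 p.2) * (v p.1 - v p.2) / ‖p.1 - p.2‖ ^ ((n : ℝ) + s)) =
      ∫ x in Ω, rhs (u x) * v x

/-- The Luxemburg norm `‖u‖_{L^Ψ(Ω)}` (with value `∞` when no admissible `λ` exists). -/
def luxNorm (n : ℕ) (Ψ : ℝ → ℝ) (Ω : Set (Euc n)) (u : Euc n → ℝ) : ℝ≥0∞ :=
  sInf {lam : ℝ≥0∞ | 0 < lam ∧ lam ≠ ⊤ ∧
    (∫⁻ x in Ω, ENNReal.ofReal (Ψ (|u x| / lam.toReal))) ≤ 1}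

/-- The Gagliardo seminorm `[u]_{s,G}` (with value `∞` when no admissible `λ` exists). -/
def gagSemi (n : ℕ) (s : ℝ) (G : ℝ → ℝ) (u : Euc n → ℝ) : ℝ≥0∞ :=
  sInf {lam : ℝ≥0∞ | 0 < lam ∧ lam ≠ ⊤ ∧
    modsG n s G (fun x => u x / lam.toReal) ≤ 1}



/-!
Condition (cond) says exactly that the right derivatives `x^(-p-1) (x g(x) - p G(x))` of
`G(x) x^(-p)` are `≤ 0` for `p = p⁺` and `≥ 0` for `p = p⁻`. Hence
`G(λx) ≤ max(λ^p⁻, λ^p⁺) G(x)`, and inverting, `G⁻¹(τ) ≤ (τ/r)^(1/p⁺) G⁻¹(r)` for `τ ≤ r`.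
Integrating the latter against `τ^(-(n+s)/n)` over `[0, 1/t]` gives `φ(1/t) ≤ λ G⁻¹(1/t)` with
`λ = t^(s/n) / (1/p⁺ - s/n)`, the integral converging because `s p⁺ < n`. Therefore
`K(t) ≤ max(λ^p⁻, λ^p⁺) ≤ max(λ^q, λ^p⁺)`, and both powers are `O(max(t, t^(sq/n)))`
since `sq/n ≤ s p⁺/n ≤ 1`.
-/

theorem monotoneOn_of_hasDerivWithinAt_Ici_nonneg {f f' : ℝ → ℝ} {s : Set ℝ}
    (hs : s.OrdConnected) (hf : ContinuousOn f s)
    (hf' : ∀ x ∈ s, HasDerivWithinAt f (f' x) (Ici x) x) (h : ∀ x ∈ s, 0 ≤ f' x) :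
    MonotoneOn f s := by
  intro a ha b hb hab
  have hsub : Icc a b ⊆ s := hs.out ha hb
  exact image_le_of_deriv_right_le_deriv_boundary (f' := 0) continuousOn_const
    (fun x _ => hasDerivWithinAt_const x _ (f a)) le_rfl (hf.mono hsub)
    (fun x hx => hf' x (hsub (Ico_subset_Icc_self hx)))
    (fun x hx => h x (hsub (Ico_subset_Icc_self hx))) ⟨hab, le_rfl⟩

theorem Real.rpow_le_max_rpow {t a b c : ℝ} (ht : 0 < t) (hab : a ≤ b) (hbc : b ≤ c) :
    t ^ b ≤ max (t ^ a) (t ^ c) := by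
  rcases le_total t 1 with h | h
  · exact le_max_of_le_left (Real.rpow_le_rpow_of_exponent_ge ht h hab)
  · exact le_max_of_le_right (Real.rpow_le_rpow_of_exponent_le h hbc)

theorem max_rpow_mul_rpow_le {c t α q p : ℝ} (hc : 0 < c) (ht : 0 < t) (hα : 0 ≤ α)
    (hqp : q ≤ p) (hαp : α * p ≤ 1) :
    max ((c * t ^ α) ^ q) ((c * t ^ α) ^ p) ≤ max (c ^ q) (c ^ p) * max t (t ^ (α * q)) := by
  rw [Real.mul_rpow hc.le (Real.rpow_nonneg ht.le _), Real.mul_rpow hc.le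
    (Real.rpow_nonneg ht.le _), ← Real.rpow_mul ht.le, ← Real.rpow_mul ht.le]
  refine max_le (mul_le_mul (le_max_left _ _) (le_max_right _ _) (by positivity)
    (by positivity)) (mul_le_mul (le_max_right _ _) ?_ (by positivity) (by positivity))
  have h := Real.rpow_le_max_rpow ht (mul_le_mul_of_nonneg_left hqp hα) hαp
  rwa [Real.rpow_one, max_comm] at h

namespace YoungPair

variable (Y : YoungPair)

theorem g_monotone : Monotone Y.g := by
  refine MonotoneOn.Iic_union_Ici (a := 0) (fun a ha b hb hab => ?_) Y.g_mono
  have := Y.g_mono (mem_Ici.2 (neg_nonneg.2 hb)) (mem_Ici.2 (neg_nonneg.2 ha)) (neg_le_neg hab)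
  linarith [Y.g_odd a, Y.g_odd b]

theorem G_zero : Y.G 0 = 0 := by
  rw [Y.G_eq 0 le_rfl, intervalIntegral.integral_same]

theorem continuousOn_G : ContinuousOn Y.G (Ici 0) :=
  (intervalIntegral.continuous_primitive (fun _ _ => Y.g_monotone.intervalIntegrable) 0
    |>.continuousOn).congr fun x hx => Y.G_eq x hx

theorem hasDerivWithinAt_G {x : ℝ} (hx : 0 ≤ x) :
    HasDerivWithinAt Y.G (Y.g x) (Ici x) x := by
  have h := intervalIntegral.integral_hasDerivWithinAt_right (a := 0) (s := Ici x)
    (t := Ioi x) Y.g_monotone.intervalIntegrable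
    Y.g_monotone.measurable.stronglyMeasurable.stronglyMeasurableAtFilter
    ((Y.g_rightCont x hx).mono Ioi_subset_Ici_self)
  exact h.congr (fun y hy => Y.G_eq y (hx.trans hy)) (Y.G_eq x hx)

theorem strictMonoOn_G : StrictMonoOn Y.G (Ici 0) := by
  intro a ha b hb hab
  have hsub : Y.G b - Y.G a = ∫ τ in a..b, Y.g τ := by
    rw [Y.G_eq a ha, Y.G_eq b hb, intervalIntegral.integral_interval_sub_left
      Y.g_monotone.intervalIntegrable Y.g_monotone.intervalIntegrable]
  have hpos : 0 < ∫ τ in a..b, Y.g τ :=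
    intervalIntegral.intervalIntegral_pos_of_pos_on Y.g_monotone.intervalIntegrable
      (fun x hx => Y.g_pos x (lt_of_le_of_lt ha hx.1)) hab
  linarith

theorem G_pos {x : ℝ} (hx : 0 < x) : 0 < Y.G x := by
  simpa [G_zero] using Y.strictMonoOn_G (mem_Ici.2 le_rfl) (mem_Ici.2 hx.le) hx

theorem hasDerivWithinAt_G_mul_rpow_neg (p : ℝ) {x : ℝ} (hx : 0 < x) :
    HasDerivWithinAt (fun y => Y.G y * y ^ (-p))
      (x ^ (-p - 1) * (x * Y.g x - p * Y.G x)) (Ici x) x := by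
  refine ((Y.hasDerivWithinAt_G hx.le).mul
    (Real.hasDerivAt_rpow_const (p := -p) (Or.inl hx.ne')).hasDerivWithinAt).congr_deriv ?_
  rw [Real.rpow_sub_one hx.ne']
  field_simp
  ring

theorem continuousOn_G_mul_rpow_neg (p : ℝ) :
    ContinuousOn (fun y => Y.G y * y ^ (-p)) (Ioi 0) :=
  (Y.continuousOn_G.mono Ioi_subset_Ici_self).mul
    (continuousOn_id.rpow_const fun _ hy => Or.inl (ne_of_gt hy))

theorem pos_of_G_pos {x : ℝ} (hx : 0 ≤ x) (h : 0 < Y.G x) : 0 < x :=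
  hx.lt_of_ne fun h0 => h.ne' (by rw [← h0, G_zero])

namespace Cond

variable {Y} {pm pp : ℝ} (hY : Y.Cond pm pp)
include hY

theorem monotoneOn_G_mul_rpow_neg : MonotoneOn (fun x => Y.G x * x ^ (-pm)) (Ioi 0) :=
  monotoneOn_of_hasDerivWithinAt_Ici_nonneg ordConnected_Ioi
    (Y.continuousOn_G_mul_rpow_neg pm)
    (fun _ hx => Y.hasDerivWithinAt_G_mul_rpow_neg pm hx) fun x hx =>
      mul_nonneg (Real.rpow_nonneg (le_of_lt hx) _) (sub_nonneg.2 (hY x hx).1)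

theorem antitoneOn_G_mul_rpow_neg : AntitoneOn (fun x => Y.G x * x ^ (-pp)) (Ioi 0) := by
  have h := monotoneOn_of_hasDerivWithinAt_Ici_nonneg ordConnected_Ioi
    (Y.continuousOn_G_mul_rpow_neg pp).neg
    (fun _ hx => (Y.hasDerivWithinAt_G_mul_rpow_neg pp hx).neg) fun x hx =>
      neg_nonneg.2 (mul_nonpos_of_nonneg_of_nonpos (Real.rpow_nonneg (le_of_lt hx) _)
        (sub_nonpos.2 (hY x hx).2))
  exact fun a ha b hb hab => neg_le_neg_iff.1 (h ha hb hab)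

theorem G_mul_le {l x : ℝ} (hl : 1 ≤ l) (hx : 0 < x) : Y.G (l * x) ≤ l ^ pp * Y.G x := by
  have hl0 : 0 < l := one_pos.trans_le hl
  have h := hY.antitoneOn_G_mul_rpow_neg (mem_Ioi.2 hx) (mem_Ioi.2 (mul_pos hl0 hx))
    (le_mul_of_one_le_left hx.le hl)
  simp only [Real.mul_rpow hl0.le hx.le, Real.rpow_neg hl0.le] at h
  have hx' : 0 < x ^ (-pp) := Real.rpow_pos_of_pos hx _
  have hl' : 0 < l ^ pp := Real.rpow_pos_of_pos hl0 _
  have h' : Y.G (l * x) / l ^ pp * x ^ (-pp) ≤ Y.G x * x ^ (-pp) := by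
    rwa [div_eq_mul_inv, mul_assoc]
  exact (div_le_iff₀' hl').1 (le_of_mul_le_mul_right h' hx')

theorem rpow_mul_G_le {l x : ℝ} (hl : 1 ≤ l) (hx : 0 < x) : l ^ pm * Y.G x ≤ Y.G (l * x) := by
  have hl0 : 0 < l := one_pos.trans_le hl
  have h := hY.monotoneOn_G_mul_rpow_neg (mem_Ioi.2 hx) (mem_Ioi.2 (mul_pos hl0 hx))
    (le_mul_of_one_le_left hx.le hl)
  simp only [Real.mul_rpow hl0.le hx.le, Real.rpow_neg hl0.le] at h
  have hx' : 0 < x ^ (-pm) := Real.rpow_pos_of_pos hx _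
  have hl' : 0 < l ^ pm := Real.rpow_pos_of_pos hl0 _
  have h' : Y.G x * x ^ (-pm) ≤ Y.G (l * x) / l ^ pm * x ^ (-pm) := by
    rwa [div_eq_mul_inv, mul_assoc]
  exact (le_div_iff₀' hl').1 (le_of_mul_le_mul_right h' hx')

theorem G_mul_le_max {l x : ℝ} (hl : 0 < l) (hx : 0 < x) :
    Y.G (l * x) ≤ max (l ^ pm) (l ^ pp) * Y.G x := by
  rcases le_total 1 l with h1 | h1
  · exact (hY.G_mul_le h1 hx).trans
      (mul_le_mul_of_nonneg_right (le_max_right _ _) (Y.G_pos hx).le)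
  · have h := hY.rpow_mul_G_le ((one_le_inv₀ hl).2 h1) (mul_pos hl hx)
    rw [inv_mul_cancel_left₀ hl.ne', Real.inv_rpow hl.le,
      inv_mul_le_iff₀ (Real.rpow_pos_of_pos hl _)] at h
    exact h.trans (mul_le_mul_of_nonneg_right (le_max_left _ _) (Y.G_pos hx).le)

theorem le_rpow_inv_mul (hpp : 0 < pp) {a b : ℝ} (ha : 0 < a) (hb : 0 < b)
    (h : Y.G a ≤ Y.G b) : a ≤ (Y.G a / Y.G b) ^ pp⁻¹ * b := by
  have hab : a ≤ b := (Y.strictMonoOn_G.le_iff_le ha.le hb.le).1 h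
  have hG := hY.G_mul_le (l := b / a) ((one_le_div ha).2 hab) ha
  rw [div_mul_cancel₀ _ ha.ne', Real.div_rpow hb.le ha.le, div_mul_eq_mul_div,
    le_div_iff₀ (Real.rpow_pos_of_pos ha _)] at hG
  have hpow : (a / b) ^ pp ≤ Y.G a / Y.G b := by
    rw [Real.div_rpow ha.le hb.le, div_le_div_iff₀ (Real.rpow_pos_of_pos hb _) (Y.G_pos hb)]
    linarith
  have hroot := Real.rpow_le_rpow (by positivity) hpow (inv_nonneg.2 hpp.le)
  rw [Real.rpow_rpow_inv (div_nonneg ha.le hb.le) hpp.ne'] at hroot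
  exact (div_le_iff₀ hb).1 hroot

theorem integral_Ginv_mul_rpow_le (hpp : 0 < pp) {Ginv : ℝ → ℝ}
    (hGinv : ∀ t : ℝ, 0 ≤ t → 0 ≤ Ginv t ∧ Y.G (Ginv t) = t) {e r : ℝ}
    (he : 0 < pp⁻¹ + e + 1) (hr : 0 < r) :
    ∫ τ in (0 : ℝ)..r, Ginv τ * τ ^ e ≤ Ginv r * r ^ (e + 1) / (pp⁻¹ + e + 1) := by
  have hGinv_pos : ∀ τ, 0 < τ → 0 < Ginv τ := fun τ hτ =>
    Y.pos_of_G_pos (hGinv τ hτ.le).1 (by rw [(hGinv τ hτ.le).2]; exact hτ)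
  have hpointwise : ∀ τ ∈ Ioc 0 r, Ginv τ * τ ^ e ≤ Ginv r / r ^ pp⁻¹ * τ ^ (pp⁻¹ + e) := by
    intro τ hτ
    have h := hY.le_rpow_inv_mul hpp (hGinv_pos τ hτ.1) (hGinv_pos r hr)
      (by rw [(hGinv τ hτ.1.le).2, (hGinv r hr.le).2]; exact hτ.2)
    rw [(hGinv τ hτ.1.le).2, (hGinv r hr.le).2] at h
    calc Ginv τ * τ ^ e ≤ (τ / r) ^ pp⁻¹ * Ginv r * τ ^ e :=
          mul_le_mul_of_nonneg_right h (Real.rpow_nonneg hτ.1.le _)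
      _ = Ginv r / r ^ pp⁻¹ * τ ^ (pp⁻¹ + e) := by
          rw [Real.div_rpow hτ.1.le hr.le, Real.rpow_add hτ.1]
          ring
  have hmajorant : ∫ τ in (0 : ℝ)..r, Ginv r / r ^ pp⁻¹ * τ ^ (pp⁻¹ + e) =
      Ginv r * r ^ (e + 1) / (pp⁻¹ + e + 1) := by
    rw [intervalIntegral.integral_const_mul, integral_rpow (Or.inl (by linarith)),
      Real.zero_rpow he.ne', sub_zero, add_assoc, Real.rpow_add hr]
    field_simp
  rw [← hmajorant, intervalIntegral.integral_of_le hr.le, intervalIntegral.integral_of_le hr.le]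
  refine integral_mono_of_nonneg ?_ ?_ ?_
  · filter_upwards [ae_restrict_mem measurableSet_Ioc] with τ hτ
    exact mul_nonneg (hGinv τ hτ.1.le).1 (Real.rpow_nonneg hτ.1.le _)
  · exact ((intervalIntegral.intervalIntegrable_rpow' (by linarith)).const_mul _).1
  · filter_upwards [ae_restrict_mem measurableSet_Ioc] with τ hτ using hpointwise τ hτ

theorem integral_Ginv_mul_rpow_one_div_le (hpp : 0 < pp) {Ginv : ℝ → ℝ}
    (hGinv : ∀ t : ℝ, 0 ≤ t → 0 ≤ Ginv t ∧ Y.G (Ginv t) = t) {n s t : ℝ} (hn : 0 < n)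
    (hκ : 0 < pp⁻¹ - s / n) (ht : 0 < t) :
    ∫ τ in (0 : ℝ)..(1 / t), Ginv τ * τ ^ (-(n + s) / n) ≤
      (pp⁻¹ - s / n)⁻¹ * t ^ (s / n) * Ginv (1 / t) := by
  have hexp : pp⁻¹ + -(n + s) / n + 1 = pp⁻¹ - s / n := by field_simp; ring
  refine (hY.integral_Ginv_mul_rpow_le hpp hGinv (hexp ▸ hκ) (one_div_pos.2 ht)).trans_eq ?_
  rw [hexp, show -(n + s) / n + 1 = -(s / n) by field_simp; ring, Real.rpow_neg (by positivity),
    Real.div_rpow zero_le_one ht.le, Real.one_rpow, inv_div, div_one]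
  ring

end Cond

end YoungPair

theorem statement11_general (n : ℕ) (s : ℝ) (hs : s ∈ Set.Ioo (0 : ℝ) 1)
    (pm pp : ℝ) (hpm : 1 < pm) (hpmpp : pm ≤ pp) (hspp : s * pp < n)
    (Y : YoungPair) (hY : Y.Cond pm pp)
    (Ginv : ℝ → ℝ)
    (hGinv : ∀ t : ℝ, 0 ≤ t → 0 ≤ Ginv t ∧ Y.G (Ginv t) = t)
    (q : ℝ) (hq : q < pm) :
    ∃ C : ℝ, 0 < C ∧ ∀ t : ℝ, 0 < t →
      t * Y.G (∫ τ in (0 : ℝ)..(1 / t), Ginv τ * τ ^ (-((n : ℝ) + s) / n)) ≤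
        C * max t (t ^ (s * q / n)) := by
  have hpp : 0 < pp := by linarith
  have hn : (0 : ℝ) < n := (mul_pos hs.1 hpp).trans hspp
  have hκ : 0 < pp⁻¹ - s / n := by
    rwa [sub_pos, div_lt_iff₀ hn, inv_mul_eq_div, lt_div_iff₀ hpp]
  refine ⟨max ((pp⁻¹ - s / n)⁻¹ ^ q) ((pp⁻¹ - s / n)⁻¹ ^ pp), by positivity, fun t ht => ?_⟩
  set lam := (pp⁻¹ - s / n)⁻¹ * t ^ (s / n)
  have hlam : 0 < lam := by positivity
  obtain ⟨hX0, hGX⟩ := hGinv (1 / t) (by positivity)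
  have hX : 0 < Ginv (1 / t) := Y.pos_of_G_pos hX0 (by rw [hGX]; positivity)
  have hI0 : 0 ≤ ∫ τ in (0 : ℝ)..(1 / t), Ginv τ * τ ^ (-((n : ℝ) + s) / n) :=
    intervalIntegral.integral_nonneg (by positivity) fun τ hτ =>
      mul_nonneg (hGinv τ hτ.1).1 (Real.rpow_nonneg hτ.1 _)
  calc _ ≤ t * Y.G (lam * Ginv (1 / t)) := by
        gcongr
        exact Y.strictMonoOn_G.monotoneOn hI0 (mul_pos hlam hX).le
          (hY.integral_Ginv_mul_rpow_one_div_le hpp hGinv hn hκ ht)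
    _ ≤ t * (max (lam ^ pm) (lam ^ pp) * (1 / t)) := by
        gcongr
        exact (hY.G_mul_le_max hlam hX).trans_eq (by rw [hGX])
    _ = max (lam ^ pm) (lam ^ pp) := by field_simp
    _ ≤ max (lam ^ q) (lam ^ pp) :=
        max_le (Real.rpow_le_max_rpow hlam hq.le hpmpp) (le_max_right _ _)
    _ ≤ _ := by
        rw [show s * q / n = s / n * q by ring]
        refine max_rpow_mul_rpow_le (inv_pos.2 hκ) ht (div_pos hs.1 hn).le
          (hq.trans_le hpmpp).le ?_
        rw [div_mul_eq_mul_div, div_le_one hn]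
        exact hspp.le

/-- the bound `K(t) = t·G((G*)⁻¹(1/t)) ≤ C·max{t, t^{sq/n}}`. -/
theorem statement11 (n : ℕ) (hn : 1 ≤ n) (s : ℝ) (hs : s ∈ Set.Ioo (0 : ℝ) 1)
    (pm pp : ℝ) (hpm : 1 < pm) (hpmpp : pm ≤ pp) (hspp : s * pp < n)
    (Y : YoungPair) (hY : Y.Cond pm pp)
    (Ginv : ℝ → ℝ)
    (hGinv : ∀ t : ℝ, 0 ≤ t → 0 ≤ Ginv t ∧ Y.G (Ginv t) = t)
    (hGinv' : ∀ t : ℝ, 0 ≤ t → Ginv (Y.G t) = t)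
    (q : ℝ) (hq0 : 0 < q) (hq : q < pm) :
    ∃ C : ℝ, 0 < C ∧ ∀ t : ℝ, 0 < t →
      t * Y.G (∫ τ in (0 : ℝ)..(1 / t), Ginv τ * τ ^ (-((n : ℝ) + s) / n)) ≤
        C * max t (t ^ (s * q / n)) :=
  statement11_general n s hs pm pp hpm hpmpp hspp Y hY Ginv hGinv q hq

end
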